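/- Let ν be a symmetric Lévy measure on ℝⁿ, let Ω′ ⊆ Ω ⊆ ℝⁿ be nonempty bounded open sets, let f ∈ L²(Ω), and let u ∈ V_ν^Ω(ℝⁿ) satisfy ⟨u,φ⟩_ν = ∫_Ω f φ dx for every φ ∈ H_ν^Ω(ℝⁿ). Then u ∈ V_ν^{Ω′}(ℝⁿ) and ⟨u,ψ⟩_ν = ∫_{Ω′} f ψ dx for every ψ ∈ H_ν^{Ω′}(ℝⁿ); i.e. weak solutions in Ω are weak solutions in every open subset Ω′ of Ω. -/

import Mathlib

open MeasureTheory Filter Set Topology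
open scoped ENNReal Topology Pointwise Classical

noncomputable section

abbrev Eucl (n : ℕ) : Type := EuclideanSpace ℝ (Fin n)

/-- A symmetric Lévy measure on ℝⁿ: ν({0}) = 0, ν(−A) = ν(A) for Borel A, and
∫ min(1,|y|²) dν < ∞. -/
def IsSymmLevy {n : ℕ} (ν : Measure (Eucl n)) : Prop :=
  ν {0} = 0 ∧ (∀ A : Set (Eucl n), MeasurableSet A → ν (-A) = ν A) ∧
    (∫⁻ y, ENNReal.ofReal (min 1 (‖y‖ ^ 2)) ∂ν) < ⊤

/-- The truncated nonlocal operator: ∫_{|y| ≥ ε} (u(x) − u(x+y)) dν(y). -/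
def truncL {n : ℕ} (ν : Measure (Eucl n)) (u : Eucl n → ℝ) (x : Eucl n) (ε : ℝ) : ℝ :=
  ∫ y in {y : Eucl n | ε ≤ ‖y‖}, (u x - u (x + y)) ∂ν

/-- `Lu(x)` is well defined with value `l`: the integrands are ν-integrable away from the
origin, and the principal value limit exists and equals `l`. -/
def HasLAt {n : ℕ} (ν : Measure (Eucl n)) (u : Eucl n → ℝ) (x : Eucl n) (l : ℝ) : Prop :=
  (∀ ε : ℝ, 0 < ε → IntegrableOn (fun y => u x - u (x + y)) {y : Eucl n | ε ≤ ‖y‖} ν) ∧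
  Tendsto (truncL ν u x) (𝓝[>] (0:ℝ)) (𝓝 l)

/-- Squared norm of the generalized Sobolev space V_ν^D(ℝⁿ). -/
def sobSq {n : ℕ} (ν : Measure (Eucl n)) (D : Set (Eucl n)) (u : Eucl n → ℝ) : ℝ≥0∞ :=
  (∫⁻ x in D, ENNReal.ofReal (u x ^ 2)) +
    (1/2) * ∫⁻ y in D, ∫⁻ z, ENNReal.ofReal ((u y - u (y + z)) ^ 2) ∂ν

/-- Membership in V_ν^D(ℝⁿ). -/
def MemV {n : ℕ} (ν : Measure (Eucl n)) (D : Set (Eucl n)) (u : Eucl n → ℝ) : Prop :=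
  Measurable u ∧ sobSq ν D u < ⊤

/-- Membership in H_ν^D(ℝⁿ): members of V_ν^D vanishing a.e. outside D. -/
def MemH {n : ℕ} (ν : Measure (Eucl n)) (D : Set (Eucl n)) (u : Eucl n → ℝ) : Prop :=
  MemV ν D u ∧ ∀ᵐ x ∂(volume : Measure (Eucl n)), x ∉ D → u x = 0

/-- The quadratic form ⟨u,u⟩_ν (with values in [0,∞]). -/
def formQ {n : ℕ} (ν : Measure (Eucl n)) (u : Eucl n → ℝ) : ℝ≥0∞ :=
  (1/2) * ∫⁻ y, ∫⁻ z, ENNReal.ofReal ((u y - u (y + z)) ^ 2) ∂ν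

/-- The bilinear form ⟨u,v⟩_ν. -/
def formB {n : ℕ} (ν : Measure (Eucl n)) (u v : Eucl n → ℝ) : ℝ :=
  (1/2) * ∫ y, (∫ z, (u y - u (y + z)) * (v y - v (y + z)) ∂ν)

/-- Weak solution of Lu = f in Ω, u = g on ℝⁿ∖Ω. -/
def IsWeakSol {n : ℕ} (ν : Measure (Eucl n)) (Ω : Set (Eucl n))
    (f g u : Eucl n → ℝ) : Prop :=
  MemV ν Ω u ∧ (∀ᵐ x ∂(volume : Measure (Eucl n)), x ∉ Ω → u x = g x) ∧
  ∀ φ : Eucl n → ℝ, MemH ν Ω φ → formB ν u φ = ∫ x in Ω, f x * φ x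

end


/-! Shrinking the domain only shrinks the `V_ν`-norm, so `u ∈ V_ν^{Ω'}`. A test function
`ψ ∈ H_ν^{Ω'}` is also admissible on `Ω`: as `ψ` vanishes off `Ω'`, the substitution
`(y, z) ↦ (y + z, -z)`, which preserves `dy dν(z)` because `ν` is symmetric, turns the energy of
`ψ` over `Ω'ᶜ` into part of its energy over `Ω'`, so the `Ω`-energy of `ψ` is at most twice its
`Ω'`-energy. Testing the equation on `Ω` with `ψ`, and using that `f ψ` vanishes a.e. on
`Ω \ Ω'`, gives the equation on `Ω'`. -/

theorem MeasureTheory.Measure.sigmaFinite_of_lintegral_ne_top {α : Type*} [MeasurableSpace α]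
    {μ : Measure α} {f : α → ℝ≥0∞} (hf : AEMeasurable f μ) (hint : ∫⁻ x, f x ∂μ ≠ ∞)
    (hzero : μ {x | f x = 0} < ∞) : SigmaFinite μ := by
  refine Measure.sigmaFinite_of_countable
    (S := insert {x | f x = 0} (range fun k : ℕ ↦ {x | ((k : ℝ≥0∞) + 1)⁻¹ ≤ f x}))
    ((countable_range _).insert _) ?_ ?_
  · rintro s (rfl | ⟨k, rfl⟩)
    · exact hzero
    · refine (meas_ge_le_lintegral_div hf (by simp) (by simp)).trans_lt ?_
      exact ENNReal.div_lt_top hint (by simp)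
  · refine eq_univ_of_forall fun x ↦ ?_
    by_cases hx : f x = 0
    · exact mem_sUnion_of_mem hx (mem_insert _ _)
    · obtain ⟨k, hk⟩ := ENNReal.exists_inv_nat_lt hx
      have hk' : ((k : ℝ≥0∞) + 1)⁻¹ ≤ f x :=
        (ENNReal.inv_le_inv.mpr le_self_add).trans hk.le
      exact mem_sUnion_of_mem (t := {x | ((k : ℝ≥0∞) + 1)⁻¹ ≤ f x}) hk'
        (mem_insert_of_mem _ ⟨k, rfl⟩)

section
variable {α : Type*} [MeasurableSpace α] {μ : Measure α} {s t : Set α}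

theorem MeasureTheory.lintegral_eq_setLIntegral_of_ae_notMem {f : α → ℝ≥0∞}
    (hs : MeasurableSet s) (hf : ∀ᵐ x ∂μ, x ∉ s → f x = 0) :
    ∫⁻ x, f x ∂μ = ∫⁻ x in s, f x ∂μ := by
  rw [← lintegral_indicator hs]
  refine lintegral_congr_ae (hf.mono fun x hx ↦ ?_)
  by_cases hxs : x ∈ s <;> simp [hxs, hx]

theorem MeasureTheory.setIntegral_eq_of_subset_of_ae_notMem {f : α → ℝ} (hs : MeasurableSet s)
    (hst : s ⊆ t) (hf : ∀ᵐ x ∂μ, x ∉ s → f x = 0) :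
    ∫ x in t, f x ∂μ = ∫ x in s, f x ∂μ := by
  rw [← inter_eq_right.mpr hst, ← setIntegral_indicator hs]
  refine integral_congr_ae (ae_restrict_of_ae (hf.mono fun x hx ↦ ?_))
  by_cases hxs : x ∈ s <;> simp [hxs, hx]

end

section AddGroup
variable {G : Type*} [MeasurableSpace G] [AddCommGroup G] [MeasurableAdd₂ G]
  {μ ν : Measure G} [SFinite μ] [SFinite ν]

theorem MeasureTheory.ae_ae_add_of_ae [μ.IsAddLeftInvariant] {P : G → Prop}
    (h : ∀ᵐ x ∂μ, P x) : ∀ᵐ y ∂μ, ∀ᵐ z ∂ν, P (y + z) :=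
  Measure.ae_ae_of_ae_prod (p := fun p : G × G ↦ P (p.1 + p.2)) <|
    ((quasiMeasurePreserving_add_swap μ ν).ae h).mono fun p hp ↦ by rwa [add_comm] at hp

variable [MeasurableNeg G]

-- `(y, z) ↦ (y + z, -z)` preserves `μ × ν`, and exchanges `y` with `y + z`.
theorem MeasureTheory.lintegral_lintegral_add_swap [μ.IsAddRightInvariant] [ν.IsNegInvariant]
    {F : G → G → ℝ≥0∞} (hF : Measurable (Function.uncurry F)) :
    ∫⁻ y, ∫⁻ z, F y (y + z) ∂ν ∂μ = ∫⁻ w, ∫⁻ z, F (w + z) w ∂ν ∂μ := by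
  have hT : MeasurePreserving (fun p : G × G ↦ (p.1 + p.2, -p.2)) (μ.prod ν) (μ.prod ν) := by
    have := (measurePreserving_sub_prod μ ν).comp
      ((MeasurePreserving.id μ).prod (Measure.measurePreserving_neg ν))
    simpa [Function.comp_def, sub_neg_eq_add] using this
  have hG : Measurable fun p : G × G ↦ F (p.1 + p.2) p.1 :=
    hF.comp ((measurable_fst.add measurable_snd).prodMk measurable_fst)
  have hF' : Measurable fun p : G × G ↦ F p.1 (p.1 + p.2) :=
    hF.comp (measurable_fst.prodMk (measurable_fst.add measurable_snd))
  rw [← lintegral_prod _ hF'.aemeasurable, ← lintegral_prod _ hG.aemeasurable,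
    ← hT.lintegral_comp hG]
  simp

noncomputable def energyDensity (ν : Measure G) (ψ : G → ℝ) (y : G) : ℝ≥0∞ :=
  ∫⁻ z, ENNReal.ofReal ((ψ y - ψ (y + z)) ^ 2) ∂ν

variable [μ.IsAddLeftInvariant] [ν.IsNegInvariant] {S : Set G} {ψ : G → ℝ}

theorem setLIntegral_compl_energyDensity_le (hS : MeasurableSet S) (hψ : Measurable ψ)
    (h0 : ∀ᵐ x ∂μ, x ∉ S → ψ x = 0) :
    ∫⁻ y in Sᶜ, energyDensity ν ψ y ∂μ ≤ ∫⁻ y in S, energyDensity ν ψ y ∂μ := by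
  set Q : G → ℝ≥0∞ := fun w ↦ ENNReal.ofReal (ψ w ^ 2)
  have hQ : Measurable Q := (hψ.pow_const 2).ennreal_ofReal
  calc ∫⁻ y in Sᶜ, energyDensity ν ψ y ∂μ
      = ∫⁻ y, ∫⁻ z, Sᶜ.indicator 1 y * Q (y + z) ∂ν ∂μ := by
        rw [← lintegral_indicator hS.compl]
        refine lintegral_congr_ae (h0.mono fun y hy ↦ ?_)
        by_cases hyS : y ∈ S <;> simp [hyS, hy, energyDensity, Q]
    _ = ∫⁻ w, ∫⁻ z, Sᶜ.indicator 1 (w + z) * Q w ∂ν ∂μ :=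
        lintegral_lintegral_add_swap (F := fun y w ↦ Sᶜ.indicator 1 y * Q w)
          (((measurable_one.indicator hS.compl).comp measurable_fst).mul (hQ.comp measurable_snd))
    _ ≤ ∫⁻ w, S.indicator (energyDensity ν ψ) w ∂μ := by
        refine lintegral_mono_ae ?_
        filter_upwards [h0, ae_ae_add_of_ae (ν := ν) h0] with w hw hwz
        by_cases hwS : w ∈ S
        · rw [indicator_of_mem hwS]
          refine lintegral_mono_ae (hwz.mono fun z hz ↦ ?_)
          by_cases hzS : w + z ∈ S <;> simp [hzS, hz, Q]
        · simp [hwS, hw hwS, Q]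
    _ = ∫⁻ y in S, energyDensity ν ψ y ∂μ := lintegral_indicator hS _

theorem lintegral_energyDensity_le_two_mul (hS : MeasurableSet S) (hψ : Measurable ψ)
    (h0 : ∀ᵐ x ∂μ, x ∉ S → ψ x = 0) :
    ∫⁻ y, energyDensity ν ψ y ∂μ ≤ 2 * ∫⁻ y in S, energyDensity ν ψ y ∂μ := by
  rw [← lintegral_add_compl _ hS, two_mul]
  exact add_le_add le_rfl (setLIntegral_compl_energyDensity_le hS hψ h0)

end AddGroup

namespace IsSymmLevy
variable {n : ℕ} {ν : Measure (Eucl n)}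

theorem sigmaFinite (hν : IsSymmLevy ν) : SigmaFinite ν := by
  refine Measure.sigmaFinite_of_lintegral_ne_top (by fun_prop) hν.2.2.ne ?_
  simp [hν.1]

theorem isNegInvariant (hν : IsSymmLevy ν) : ν.IsNegInvariant :=
  ⟨Measure.ext fun A hA ↦ by rw [Measure.neg_apply, hν.2.1 A hA]⟩

end IsSymmLevy

section
variable {n : ℕ} {ν : Measure (Eucl n)} {D D' : Set (Eucl n)} {u : Eucl n → ℝ}

theorem sobSq_mono (hD : D' ⊆ D) : sobSq ν D' u ≤ sobSq ν D u := by
  unfold sobSq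
  gcongr

theorem MemV.mono (hu : MemV ν D u) (hD : D' ⊆ D) : MemV ν D' u :=
  ⟨hu.1, (sobSq_mono hD).trans_lt hu.2⟩

theorem sobSq_le_two_mul_of_memH (hν : IsSymmLevy ν) (hD' : MeasurableSet D')
    (hu : MemH ν D' u) : sobSq ν D u ≤ 2 * sobSq ν D' u := by
  have := hν.sigmaFinite
  have := hν.isNegInvariant
  have hsq : ∫⁻ x in D, ENNReal.ofReal (u x ^ 2) ≤ ∫⁻ x in D', ENNReal.ofReal (u x ^ 2) := by
    rw [← lintegral_eq_setLIntegral_of_ae_notMem hD' (hu.2.mono fun x hx hxD ↦ by simp [hx hxD])]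
    exact setLIntegral_le_lintegral _ _
  have henergy : ∫⁻ y in D, energyDensity ν u y ≤ 2 * ∫⁻ y in D', energyDensity ν u y :=
    (setLIntegral_le_lintegral _ _).trans
      (lintegral_energyDensity_le_two_mul hD' hu.1.1 hu.2)
  calc sobSq ν D u
      = (∫⁻ x in D, ENNReal.ofReal (u x ^ 2)) + 1 / 2 * ∫⁻ y in D, energyDensity ν u y := rfl
    _ ≤ (∫⁻ x in D', ENNReal.ofReal (u x ^ 2)) +
        2 * (1 / 2 * ∫⁻ y in D', energyDensity ν u y) := by
        rw [mul_left_comm]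
        gcongr
    _ ≤ 2 * ((∫⁻ x in D', ENNReal.ofReal (u x ^ 2)) +
        1 / 2 * ∫⁻ y in D', energyDensity ν u y) := by
        rw [mul_add]
        gcongr
        exact le_mul_of_one_le_left' one_le_two
    _ = 2 * sobSq ν D' u := rfl

theorem MemH.mono (hν : IsSymmLevy ν) (hD' : MeasurableSet D') (hu : MemH ν D' u)
    (hD : D' ⊆ D) : MemH ν D u :=
  ⟨⟨hu.1.1, (sobSq_le_two_mul_of_memH hν hD' hu).trans_lt
      (ENNReal.mul_lt_top ENNReal.ofNat_lt_top hu.1.2)⟩,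
    hu.2.mono fun _ hx hxD ↦ hx fun h ↦ hxD (hD h)⟩

end

theorem dirichlet_stmt12_general {n : ℕ} (ν : Measure (Eucl n)) (hν : IsSymmLevy ν)
    (Ω Ω' : Set (Eucl n)) (hsub : Ω' ⊆ Ω)
    (hΩ'o : IsOpen Ω')
    (f : Eucl n → ℝ)
    (u : Eucl n → ℝ) (hu : MemV ν Ω u)
    (hsol : ∀ φ : Eucl n → ℝ, MemH ν Ω φ → formB ν u φ = ∫ x in Ω, f x * φ x) :
    MemV ν Ω' u ∧
      ∀ ψ : Eucl n → ℝ, MemH ν Ω' ψ → formB ν u ψ = ∫ x in Ω', f x * ψ x := by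
  refine ⟨hu.mono hsub, fun ψ hψ ↦ ?_⟩
  rw [hsol ψ (hψ.mono hν hΩ'o.measurableSet hsub)]
  exact setIntegral_eq_of_subset_of_ae_notMem hΩ'o.measurableSet hsub
    (hψ.2.mono fun x hx hxΩ' ↦ by simp [hx hxΩ'])

theorem dirichlet_stmt12 {n : ℕ} (ν : Measure (Eucl n)) (hν : IsSymmLevy ν)
    (Ω Ω' : Set (Eucl n)) (hsub : Ω' ⊆ Ω)
    (hΩo : IsOpen Ω) (hΩne : Ω.Nonempty) (hΩb : Bornology.IsBounded Ω)
    (hΩ'o : IsOpen Ω') (hΩ'ne : Ω'.Nonempty)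
    (f : Eucl n → ℝ) (hf : MemLp f 2 ((volume : Measure (Eucl n)).restrict Ω))
    (u : Eucl n → ℝ) (hu : MemV ν Ω u)
    (hsol : ∀ φ : Eucl n → ℝ, MemH ν Ω φ → formB ν u φ = ∫ x in Ω, f x * φ x) :
    MemV ν Ω' u ∧
      ∀ ψ : Eucl n → ℝ, MemH ν Ω' ψ → formB ν u ψ = ∫ x in Ω', f x * ψ x :=
  dirichlet_stmt12_general ν hν Ω Ω' hsub hΩ'o f u hu hsol
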